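/- arXiv:1810.12951 — 6 statements merged into one kernel-verified Lean document; each statement's English description precedes it below -/
import Mathlib

section
/- Let β ∈ (0,1) and let f be continuous on [0, ∞). Then for every t > 0 the function u(s) = J^{1−β}(J^β f)(s) (with J^β f extended by 0 at s = 0) is differentiable at t with u′(t) = f(t) − f(0); equivalently, the Caputo-type derivative ∂^β applied to J^β f satisfies ∂^β J^β f(t) = f(t) − f(0) for all t > 0. -/
/-!
Fubini on the triangle `0 < r < s < t` (Dirichlet's formula) together with the Beta integral
`∫_r^t (t-s)^(b-1) (s-r)^(a-1) ds = Γ(a)Γ(b)/Γ(a+b) (t-r)^(a+b-1)` gives the semigroup law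
`J^q (J^p f) = J^(p+q) f`. Hence `J^(1-β) (J^β f) = J^1 f`, the primitive of `f - f 0`, whose
derivative is `f - f 0` by the fundamental theorem of calculus.
-/

/-- The modified fractional integral
`J^p f(t) = (1/Γ(p)) ∫₀ᵗ (t−s)^{p−1} (f(s) − f(0)) ds`.
Note that `J^p f` takes the value `0` at `t = 0` (the continuous extension). -/
noncomputable def modInt (p : ℝ) (f : ℝ → ℝ) (t : ℝ) : ℝ :=
  (1 / Real.Gamma p) * ∫ s in (0:ℝ)..t, (t - s) ^ (p - 1) * (f s - f 0)

open MeasureTheory Set Real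

theorem integral_rpow_mul_sub_rpow {a b c : ℝ} (ha : 0 < a) (hb : 0 < b) (hc : 0 < c) :
    ∫ x in (0:ℝ)..c, x ^ (a - 1) * (c - x) ^ (b - 1)
      = Gamma a * Gamma b / Gamma (a + b) * c ^ (a + b - 1) := by
  have hcast : ((∫ x in (0:ℝ)..c, x ^ (a - 1) * (c - x) ^ (b - 1) : ℝ) : ℂ)
      = ∫ x in (0:ℝ)..c, (x : ℂ) ^ ((a : ℂ) - 1) * ((c : ℂ) - x) ^ ((b : ℂ) - 1) := by
    rw [← intervalIntegral.integral_ofReal]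
    refine intervalIntegral.integral_congr fun x hx => ?_
    rw [uIcc_of_le hc.le] at hx
    push_cast [Complex.ofReal_cpow hx.1, Complex.ofReal_cpow (sub_nonneg.2 hx.2)]
    rfl
  have hΓ := Complex.Gamma_mul_Gamma_eq_betaIntegral (s := a) (t := b) (by simpa) (by simpa)
  rw [Complex.betaIntegral_scaled (a : ℂ) b hc] at hcast
  have hΓab : Complex.Gamma (a + b) ≠ 0 := by
    rw [← Complex.ofReal_add, Complex.Gamma_ofReal]
    exact_mod_cast (Gamma_pos_of_pos (add_pos ha hb)).ne'
  apply Complex.ofReal_injective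
  push_cast [hcast, ← Complex.Gamma_ofReal, hΓ, Complex.ofReal_cpow hc.le]
  field_simp

theorem integral_sub_rpow_mul_sub_rpow {a b r t : ℝ} (ha : 0 < a) (hb : 0 < b) (hrt : r < t) :
    ∫ s in r..t, (t - s) ^ (b - 1) * (s - r) ^ (a - 1)
      = Gamma a * Gamma b / Gamma (a + b) * (t - r) ^ (a + b - 1) := by
  have := intervalIntegral.integral_comp_sub_right
    (fun x => x ^ (a - 1) * (t - r - x) ^ (b - 1)) r (a := r) (b := t)
  simp only [sub_self, sub_sub_sub_cancel_right] at this
  rw [← integral_rpow_mul_sub_rpow ha hb (sub_pos.2 hrt), ← this]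
  simp only [mul_comm]

section Dirichlet

variable {a b t : ℝ}

noncomputable def dirichletIntegrand (a b t : ℝ) (g : ℝ → ℝ) : ℝ × ℝ → ℝ :=
  {p : ℝ × ℝ | 0 < p.2 ∧ p.2 < p.1 ∧ p.1 < t}.indicator
    fun p => (t - p.1) ^ (b - 1) * ((p.1 - p.2) ^ (a - 1) * g p.2)

theorem dirichletIntegrand_prodMk_left (g : ℝ → ℝ) {s : ℝ} (hs : s ∈ Ioo 0 t) :
    (fun r => dirichletIntegrand a b t g (s, r))
      = (Ioo 0 s).indicator fun r => (t - s) ^ (b - 1) * ((s - r) ^ (a - 1) * g r) := by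
  ext r
  simp only [dirichletIntegrand, indicator_apply, mem_ofPred_eq, mem_Ioo]
  congr 1
  exact propext ⟨fun h => ⟨h.1, h.2.1⟩, fun h => ⟨h.1, h.2, hs.2⟩⟩

theorem dirichletIntegrand_prodMk_right (g : ℝ → ℝ) {r : ℝ} (hr : r ∈ Ioo 0 t) :
    (fun s => dirichletIntegrand a b t g (s, r))
      = (Ioo r t).indicator fun s => (t - s) ^ (b - 1) * (s - r) ^ (a - 1) * g r := by
  ext s
  simp only [dirichletIntegrand, indicator_apply, mem_ofPred_eq, mem_Ioo, mul_assoc]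
  congr 1
  exact propext ⟨fun h => h.2, fun h => ⟨hr.1, h⟩⟩

theorem dirichletIntegrand_eq_zero {g : ℝ → ℝ} {s r : ℝ} (h : s ∉ Ioo 0 t ∨ r ∉ Ioo 0 t) :
    dirichletIntegrand a b t g (s, r) = 0 := by
  refine indicator_of_notMem (fun hp => ?_) _
  obtain ⟨h0r, hrs, hst⟩ := hp
  rcases h with h | h
  · exact h ⟨h0r.trans hrs, hst⟩
  · exact h ⟨h0r, hrs.trans hst⟩

theorem integral_dirichletIntegrand_snd (g : ℝ → ℝ) (s : ℝ) :
    ∫ r, dirichletIntegrand a b t g (s, r)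
      = (Ioo 0 t).indicator
          (fun s => (t - s) ^ (b - 1) * ∫ r in 0..s, (s - r) ^ (a - 1) * g r) s := by
  by_cases hs : s ∈ Ioo 0 t
  · rw [dirichletIntegrand_prodMk_left g hs, integral_indicator measurableSet_Ioo,
      indicator_of_mem hs, integral_const_mul, intervalIntegral.integral_of_le hs.1.le,
      integral_Ioc_eq_integral_Ioo]
  · simp [dirichletIntegrand_eq_zero (Or.inl hs), indicator_of_notMem hs]

theorem integral_dirichletIntegrand_fst (ha : 0 < a) (hb : 0 < b) (g : ℝ → ℝ) (r : ℝ) :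
    ∫ s, dirichletIntegrand a b t g (s, r)
      = (Ioo 0 t).indicator
          (fun r => Gamma a * Gamma b / Gamma (a + b) * (t - r) ^ (a + b - 1) * g r) r := by
  by_cases hr : r ∈ Ioo 0 t
  · rw [dirichletIntegrand_prodMk_right g hr, integral_indicator measurableSet_Ioo,
      indicator_of_mem hr, integral_mul_const, ← integral_Ioc_eq_integral_Ioo,
      ← intervalIntegral.integral_of_le hr.2.le, integral_sub_rpow_mul_sub_rpow ha hb hr.2]
  · simp [dirichletIntegrand_eq_zero (Or.inr hr), indicator_of_notMem hr]

theorem norm_dirichletIntegrand (g : ℝ → ℝ) (p : ℝ × ℝ) :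
    ‖dirichletIntegrand a b t g p‖ = dirichletIntegrand a b t (fun r => ‖g r‖) p := by
  simp only [dirichletIntegrand, norm_indicator_eq_indicator_norm]
  refine congrFun (indicator_congr fun q hq => ?_) p
  obtain ⟨_, hrs, hst⟩ := hq
  rw [norm_mul, norm_mul, norm_of_nonneg (rpow_nonneg (sub_nonneg.2 hst.le) _),
    norm_of_nonneg (rpow_nonneg (sub_nonneg.2 hrs.le) _)]

theorem measurable_dirichletIntegrand {g : ℝ → ℝ} (hg : Measurable g) :
    Measurable (dirichletIntegrand a b t g) := by
  refine Measurable.indicator (by fun_prop) ?_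
  exact (measurableSet_lt measurable_const measurable_snd).inter
    ((measurableSet_lt measurable_snd measurable_fst).inter
      (measurableSet_lt measurable_fst measurable_const))

theorem integrable_dirichletIntegrand (ha : 0 < a) (hb : 0 < b) (ht : 0 ≤ t) {g : ℝ → ℝ}
    (hg : Continuous g) : Integrable (dirichletIntegrand a b t g) (volume.prod volume) := by
  rw [integrable_prod_iff' (measurable_dirichletIntegrand hg.measurable).aestronglyMeasurable]
  constructor
  · refine Filter.Eventually.of_forall fun r => ?_
    by_cases hr : r ∈ Ioo 0 t
    · have hkernel :
          IntervalIntegrable (fun s => (t - s) ^ (b - 1) * (s - r) ^ (a - 1)) volume r t := by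
        -- an interval integral that is not the junk value `0` comes from an integrable function
        refine intervalIntegral.intervalIntegrable_of_integral_ne_zero ?_
        rw [integral_sub_rpow_mul_sub_rpow ha hb hr.2]
        have := sub_pos.2 hr.2
        positivity
      rw [dirichletIntegrand_prodMk_right g hr, integrable_indicator_iff measurableSet_Ioo,
        ← integrableOn_Ioc_iff_integrableOn_Ioo,
        ← intervalIntegrable_iff_integrableOn_Ioc_of_le hr.2.le]
      exact hkernel.mul_const _
    · simp [dirichletIntegrand_eq_zero (Or.inr hr)]
  · simp_rw [norm_dirichletIntegrand, integral_dirichletIntegrand_fst ha hb]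
    rw [integrable_indicator_iff measurableSet_Ioo, ← integrableOn_Icc_iff_integrableOn_Ioo,
      ← intervalIntegrable_iff_integrableOn_Icc_of_le ht]
    have hpow : IntervalIntegrable (fun r => (t - r) ^ (a + b - 1)) volume 0 t := by
      have hrpow := intervalIntegral.intervalIntegrable_rpow' (a := 0) (b := t)
        (show -1 < a + b - 1 by linarith)
      simpa using (hrpow.comp_sub_left t).symm
    exact (hpow.const_mul _).mul_continuousOn hg.norm.continuousOn

theorem integral_sub_rpow_mul_integral_sub_rpow (ha : 0 < a) (hb : 0 < b) (ht : 0 ≤ t)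
    {g : ℝ → ℝ} (hg : Continuous g) :
    ∫ s in 0..t, (t - s) ^ (b - 1) * ∫ r in 0..s, (s - r) ^ (a - 1) * g r
      = Gamma a * Gamma b / Gamma (a + b) * ∫ r in 0..t, (t - r) ^ (a + b - 1) * g r := by
  calc ∫ s in 0..t, (t - s) ^ (b - 1) * ∫ r in 0..s, (s - r) ^ (a - 1) * g r
      = ∫ s, ∫ r, dirichletIntegrand a b t g (s, r) := by
        simp_rw [integral_dirichletIntegrand_snd, integral_indicator measurableSet_Ioo,
          intervalIntegral.integral_of_le ht, integral_Ioc_eq_integral_Ioo]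
    _ = ∫ r, ∫ s, dirichletIntegrand a b t g (s, r) :=
        integral_integral_swap (integrable_dirichletIntegrand ha hb ht hg)
    _ = _ := by
        simp_rw [integral_dirichletIntegrand_fst ha hb, integral_indicator measurableSet_Ioo,
          intervalIntegral.integral_of_le ht, integral_Ioc_eq_integral_Ioo, ← integral_const_mul,
          mul_assoc]

end Dirichlet

theorem modInt_zero_right (p : ℝ) (f : ℝ → ℝ) : modInt p f 0 = 0 := by
  simp [modInt]

theorem modInt_congr {p t : ℝ} {f g : ℝ → ℝ} (ht : 0 ≤ t) (h : EqOn f g (Icc 0 t)) :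
    modInt p f t = modInt p g t := by
  unfold modInt
  congr 1
  refine intervalIntegral.integral_congr fun s hs => ?_
  rw [uIcc_of_le ht] at hs
  simp only [h hs, h (left_mem_Icc.2 ht)]

theorem modInt_modInt_of_continuous {p q t : ℝ} (hp : 0 < p) (hq : 0 < q) (ht : 0 ≤ t)
    {f : ℝ → ℝ} (hf : Continuous f) : modInt q (modInt p f) t = modInt (p + q) f t := by
  rw [modInt]
  simp only [modInt_zero_right, sub_zero]
  simp only [modInt, mul_left_comm _ (1 / Gamma p), intervalIntegral.integral_const_mul,
    integral_sub_rpow_mul_integral_sub_rpow (g := fun r => f r - f 0) hp hq ht (by fun_prop)]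
  field_simp

theorem modInt_modInt {p q t : ℝ} (hp : 0 < p) (hq : 0 < q) (ht : 0 ≤ t) {f : ℝ → ℝ}
    (hf : ContinuousOn f (Ici 0)) : modInt q (modInt p f) t = modInt (p + q) f t := by
  set F : ℝ → ℝ := fun x => f (max x 0)
  have hF : Continuous F :=
    hf.comp_continuous (continuous_id.max continuous_const) fun x => le_max_right x 0
  have hfF : EqOn f F (Ici 0) := fun x hx => by simp [F, max_eq_left hx.out]
  calc modInt q (modInt p f) t
      = modInt q (modInt p F) t :=
        modInt_congr ht fun s hs => modInt_congr hs.1 (hfF.mono Icc_subset_Ici_self)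
    _ = modInt (p + q) F t := modInt_modInt_of_continuous hp hq ht hF
    _ = modInt (p + q) f t := (modInt_congr ht (hfF.mono Icc_subset_Ici_self)).symm

theorem modInt_one (f : ℝ → ℝ) (t : ℝ) : modInt 1 f t = ∫ s in 0..t, (f s - f 0) := by
  simp [modInt]

theorem hasDerivAt_modInt_one {f : ℝ → ℝ} (hf : ContinuousOn f (Ici 0)) {t : ℝ} (ht : 0 < t) :
    HasDerivAt (modInt 1 f) (f t - f 0) t := by
  have hg : ContinuousOn (fun s => f s - f 0) (Ici 0) := hf.sub continuousOn_const
  rw [funext (modInt_one f)]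
  exact intervalIntegral.integral_hasDerivAt_right
    (hg.mono (uIcc_of_le ht.le ▸ Icc_subset_Ici_self)).intervalIntegrable
    ((hg.mono Ioi_subset_Ici_self).stronglyMeasurableAtFilter isOpen_Ioi t ht)
    (hg.continuousAt (Ici_mem_nhds ht))

/-- For `β ∈ (0,1)` and `f` continuous on `[0,∞)`, the function
`u = J^{1−β}(J^β f)` (with `J^β f` extended by `0` at `0`) is differentiable at every
`t > 0` with `u′(t) = f(t) − f(0)`, i.e. the Caputo-type derivative satisfies
`∂^β J^β f(t) = f(t) − f(0)`. -/
theorem caputo_deriv_modInt (β : ℝ) (hβ0 : 0 < β) (hβ1 : β < 1)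
    (f : ℝ → ℝ) (hf : ContinuousOn f (Set.Ici 0)) :
    ∀ t > (0:ℝ),
      HasDerivAt (fun s => modInt (1 - β) (modInt β f) s) (f t - f 0) t := by
  intro t ht
  refine (hasDerivAt_modInt_one hf ht).congr_of_eventuallyEq ?_
  filter_upwards [Ioi_mem_nhds ht] with s hs
  rw [modInt_modInt hβ0 (sub_pos.2 hβ1) hs.out.le hf, add_sub_cancel]
end

section
/- Let p > 0 and let f be continuous on [0, ∞) with |f(t)| ≤ M e^{ct} for some constants M, c and all t ≥ 0. Then for every real λ > max(c, 0), the Laplace transform of J^p f is defined and satisfies L[J^p f](λ) = λ^{−p} L[f](λ) − λ^{−p−1} f(0). -/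
noncomputable def laplace (f : ℝ → ℝ) (l : ℝ) : ℝ :=
  ∫ t in Set.Ioi (0:ℝ), f t * Real.exp (-l * t)

open MeasureTheory Set Real ContinuousLinearMap
open scoped Convolution

section Laplace

variable {φ ψ : ℝ → ℝ} {l : ℝ}

lemma laplace_const_mul (a : ℝ) :
    laplace (fun t => a * φ t) l = a * laplace φ l := by
  simp only [laplace, mul_assoc, integral_const_mul]

lemma laplace_eq_integral_indicator :
    laplace φ l = ∫ t, (Ioi 0).indicator (fun t => φ t * exp (-l * t)) t :=
  (integral_indicator measurableSet_Ioi).symm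

lemma laplace_sub (hφ : IntegrableOn (fun t => φ t * exp (-l * t)) (Ioi 0))
    (hψ : IntegrableOn (fun t => ψ t * exp (-l * t)) (Ioi 0)) :
    laplace (fun t => φ t - ψ t) l = laplace φ l - laplace ψ l := by
  simp only [laplace, sub_mul]
  exact integral_sub hφ hψ

lemma integrableOn_const_mul_exp (a : ℝ) (hl : 0 < l) :
    IntegrableOn (fun t => a * exp (-l * t)) (Ioi 0) :=
  (exp_neg_integrableOn_Ioi 0 hl).const_mul a

lemma laplace_const (a : ℝ) (hl : 0 < l) : laplace (fun _ => a) l = a * l⁻¹ := by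
  rw [laplace, integral_const_mul, integral_exp_mul_Ioi (neg_neg_of_pos hl), mul_zero, exp_zero]
  field_simp

lemma integrableOn_rpow_mul_exp {p : ℝ} (hp : 0 < p) (hl : 0 < l) :
    IntegrableOn (fun t => t ^ (p - 1) * exp (-l * t)) (Ioi 0) := by
  simpa only [rpow_one] using
    integrableOn_rpow_mul_exp_neg_mul_rpow (by linarith : -1 < p - 1) zero_lt_one hl

lemma laplace_rpow {p : ℝ} (hp : 0 < p) (hl : 0 < l) :
    laplace (· ^ (p - 1)) l = l ^ (-p) * Gamma p := by
  simp only [laplace, neg_mul, integral_rpow_mul_exp_neg_mul_Ioi hp hl, one_div,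
    inv_rpow hl.le, rpow_neg hl.le]

lemma integrableOn_mul_exp_of_abs_le_exp {M c : ℝ}
    (hφ : AEStronglyMeasurable φ (volume.restrict (Ioi 0)))
    (hbd : ∀ t > 0, |φ t| ≤ M * exp (c * t)) (hcl : c < l) :
    IntegrableOn (fun t => φ t * exp (-l * t)) (Ioi 0) := by
  refine (integrableOn_const_mul_exp M (sub_pos.2 hcl)).mono'
    (hφ.mul (continuous_exp.comp (continuous_const_mul _)).aestronglyMeasurable) ?_
  filter_upwards [self_mem_ae_restrict measurableSet_Ioi] with t ht
  calc ‖φ t * exp (-l * t)‖ = |φ t| * exp (-l * t) := by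
        rw [norm_mul, norm_eq_abs, norm_of_nonneg (exp_pos _).le]
    _ ≤ M * exp (c * t) * exp (-l * t) := by gcongr; exact hbd t ht
    _ = M * exp (-(l - c) * t) := by rw [mul_assoc, ← exp_add]; ring_nf

noncomputable def causalConv (φ ψ : ℝ → ℝ) (t : ℝ) : ℝ :=
  ∫ s in (0:ℝ)..t, φ s * ψ (t - s)

lemma indicator_causalConv_mul_exp :
    (Ioi 0).indicator (fun t => causalConv φ ψ t * exp (-l * t)) =
      (Ioi 0).indicator (fun s => φ s * exp (-l * s)) ⋆[mul ℝ ℝ]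
        (Ioi 0).indicator (fun u => ψ u * exp (-l * u)) := by
  ext t
  have hintegrand : ∀ s, (Ioi 0).indicator (fun s => φ s * exp (-l * s)) s *
      (Ioi 0).indicator (fun u => ψ u * exp (-l * u)) (t - s) =
        (Ioo 0 t).indicator (fun s => φ s * ψ (t - s) * exp (-l * t)) s := by
    intro s
    by_cases hs : s ∈ Ioo 0 t
    · have hts : t - s ∈ Ioi 0 := sub_pos.2 hs.2
      rw [indicator_of_mem (mem_Ioi.2 hs.1), indicator_of_mem hts, indicator_of_mem hs,
        show -l * t = -l * s + -l * (t - s) by ring, exp_add]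
      ring
    · rw [indicator_of_notMem hs, mul_eq_zero]
      by_contra! h
      exact hs ⟨mem_of_indicator_ne_zero h.1, sub_pos.1 (mem_of_indicator_ne_zero h.2)⟩
  rw [convolution_mul, integral_congr_ae (.of_forall hintegrand),
    integral_indicator measurableSet_Ioo, integral_mul_const]
  rcases le_or_gt t 0 with ht | ht
  · rw [indicator_of_notMem (notMem_Ioi.2 ht), Ioo_eq_empty_of_le ht, Measure.restrict_empty,
      integral_zero_measure, zero_mul]
  · rw [indicator_of_mem (mem_Ioi.2 ht), causalConv, intervalIntegral.integral_of_le ht.le,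
      integral_Ioc_eq_integral_Ioo]

theorem laplace_causalConv
    (hφ : IntegrableOn (fun t => φ t * exp (-l * t)) (Ioi 0))
    (hψ : IntegrableOn (fun t => ψ t * exp (-l * t)) (Ioi 0)) :
    IntegrableOn (fun t => causalConv φ ψ t * exp (-l * t)) (Ioi 0) ∧
      laplace (causalConv φ ψ) l = laplace φ l * laplace ψ l := by
  rw [← integrable_indicator_iff measurableSet_Ioi] at hφ hψ ⊢
  rw [laplace_eq_integral_indicator, laplace_eq_integral_indicator, laplace_eq_integral_indicator,
    indicator_causalConv_mul_exp]
  exact ⟨hφ.integrable_convolution _ hψ, integral_convolution _ hφ hψ⟩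

end Laplace

lemma modInt_eq_causalConv (p : ℝ) (f : ℝ → ℝ) :
    modInt p f = fun t => 1 / Gamma p * causalConv (fun s => f s - f 0) (· ^ (p - 1)) t := by
  ext t
  simp only [modInt, causalConv, mul_comm]

/-- For `p > 0` and `f` continuous on `[0,∞)` of exponential order,
the Laplace transform of `J^p f` is defined for `λ > max(c, 0)` and satisfies
`L[J^p f](λ) = λ^{−p} L[f](λ) − λ^{−p−1} f(0)`. -/
theorem laplace_modInt (p : ℝ) (hp : 0 < p)
    (f : ℝ → ℝ) (hf : ContinuousOn f (Set.Ici 0))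
    (M c : ℝ) (hbd : ∀ t ≥ (0:ℝ), |f t| ≤ M * Real.exp (c * t)) :
    ∀ l > max c 0,
      MeasureTheory.IntegrableOn (fun t => modInt p f t * Real.exp (-l * t)) (Set.Ioi 0) ∧
      laplace (modInt p f) l = l ^ (-p) * laplace f l - l ^ (-p - 1) * f 0 := by
  intro l hl
  obtain ⟨hcl, hl0⟩ := max_lt_iff.1 hl
  have hf_int : IntegrableOn (fun t => f t * exp (-l * t)) (Ioi 0) :=
    integrableOn_mul_exp_of_abs_le_exp
      ((hf.mono Ioi_subset_Ici_self).aestronglyMeasurable measurableSet_Ioi)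
      (fun t ht => hbd t ht.le) hcl
  have hf0_int := integrableOn_const_mul_exp (f 0) hl0
  obtain ⟨hconv_int, hconv⟩ :=
    laplace_causalConv (φ := fun t => f t - f 0)
      ((hf_int.sub hf0_int).congr_fun (fun t _ => (sub_mul _ _ _).symm) measurableSet_Ioi)
      (integrableOn_rpow_mul_exp hp hl0)
  rw [modInt_eq_causalConv]
  refine ⟨IntegrableOn.congr_fun (hconv_int.const_mul (1 / Gamma p))
    (fun t _ => (mul_assoc _ _ _).symm) measurableSet_Ioi, ?_⟩
  rw [laplace_const_mul, hconv, laplace_sub hf_int hf0_int, laplace_const _ hl0,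
    laplace_rpow hp hl0, rpow_sub hl0, rpow_one]
  field_simp [(Gamma_pos_of_pos hp).ne']
end

section
/- Let β ∈ (0,1) and ρ > 0. There exist constants C₁, C₂ > 0 such that for all t > 0, |E_{β,ρ}(t)| ≤ C₁ (1 + t)^{(1−ρ)/β} e^{t^{1/β}} + C₂/(1 + t). -/
/-!
Put `s = t^(1/β)`, so that the `k`-th term of the series is `s^(1-ρ) · s^a / Γ(a + 1)` with
`a = βk + ρ - 1 > -1`. Log-convexity of `Γ` bounds `s^a / Γ(a + 1)` by twice the sum of the two
exponential-series terms `s^n / n!` and `s^(n+1) / (n+1)!` with `n = ⌊a⌋₊`, and since the `a`'s are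
`β`-spaced, at most `⌈2/β⌉` of them give the same `n`. Hence the series is at most
`4⌈2/β⌉ s^(1-ρ) e^s` when `s ≥ 1`, while for `t ≤ 1` it is dominated by its value at `t = 1`.
-/

/-- The two-parameter Mittag-Leffler function
`E_{β,ρ}(z) = ∑_{k=0}^∞ z^k / Γ(βk + ρ)`. -/
noncomputable def mittagLeffler (β ρ z : ℝ) : ℝ :=
  ∑' k : ℕ, z ^ k / Real.Gamma (β * k + ρ)

open Finset Real Nat

namespace Real

lemma one_le_Gamma_of_le_one {x : ℝ} (hx0 : 0 < x) (hx1 : x ≤ 1) : 1 ≤ Gamma x := by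
  simpa using Gamma_strictAntiOn_Ioc.antitoneOn ⟨hx0, hx1⟩ ⟨one_pos, le_rfl⟩ hx1

lemma factorial_mul_rpow_le_Gamma (n : ℕ) {θ : ℝ} (hθ : 0 ≤ θ) :
    (n + 1)! * ((n : ℝ) + 1) ^ θ ≤ Gamma (n + 2 + θ) := by
  have hΓ : Gamma (n + 2) = (n + 1)! := by
    simpa [add_assoc, one_add_one_eq_two] using Gamma_nat_eq_factorial (n + 1)
  rcases hθ.eq_or_lt with rfl | hθ
  · simp [hΓ]
  have hlog := BohrMollerup.f_add_nat_ge convexOn_log_Gamma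
    (fun {y} hy ↦ by
      simp only [Function.comp, Gamma_add_one hy.ne', log_mul hy.ne' (Gamma_pos_of_pos hy).ne',
        add_comm])
    (le_add_self : 2 ≤ n + 2) hθ
  have hpos : (0 : ℝ) < (n : ℝ) + 1 := by positivity
  push_cast at hlog
  rw [show (n : ℝ) + 2 - 1 = n + 1 by ring, Function.comp_apply, Function.comp_apply, hΓ] at hlog
  calc ((n + 1)! : ℝ) * ((n : ℝ) + 1) ^ θ
      = exp (log (n + 1)! + θ * log ((n : ℝ) + 1)) := by
        rw [exp_add, exp_log (by positivity), rpow_def_of_pos hpos, mul_comm θ]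
    _ ≤ exp (log (Gamma (n + 2 + θ))) := exp_le_exp.2 hlog
    _ = Gamma (n + 2 + θ) := exp_log (Gamma_pos_of_pos (by positivity))

lemma factorial_mul_rpow_le_two_mul_Gamma (n : ℕ) {θ : ℝ} (hθ0 : 0 ≤ θ) (hθ1 : θ ≤ 1) :
    n ! * ((n : ℝ) + 1) ^ θ ≤ 2 * Gamma (n + 1 + θ) := by
  have hpos : 0 < (n : ℝ) + 1 + θ := by positivity
  have h := factorial_mul_rpow_le_Gamma n hθ0
  rw [show (n : ℝ) + 2 + θ = n + 1 + θ + 1 by ring, Gamma_add_one hpos.ne', factorial_succ,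
    Nat.cast_mul, Nat.cast_succ, mul_assoc] at h
  have hΓ : 0 < Gamma (n + 1 + θ) := Gamma_pos_of_pos hpos
  nlinarith

lemma rpow_le_one_add {x θ : ℝ} (hx : 0 ≤ x) (hθ0 : 0 ≤ θ) (hθ1 : θ ≤ 1) : x ^ θ ≤ 1 + x := by
  have h := geom_mean_le_arith_mean2_weighted hθ0 (sub_nonneg.2 hθ1) hx zero_le_one (by ring)
  rw [one_rpow, mul_one] at h
  nlinarith

lemma rpow_le_two_rpow_abs_mul_one_add_rpow {t : ℝ} (ht : 1 ≤ t) (e : ℝ) :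
    t ^ e ≤ 2 ^ |e| * (1 + t) ^ e := by
  have ht0 : 0 < t := by linarith
  set u := (1 + t) / t
  have hu1 : 1 ≤ u := (one_le_div ht0).2 (by linarith)
  have hu2 : u ≤ 2 := (div_le_iff₀ ht0).2 (by linarith)
  have hsplit : t ^ e = u ^ (-e) * (1 + t) ^ e := by
    rw [show 1 + t = u * t from (div_mul_cancel₀ _ ht0.ne').symm, mul_rpow (by positivity) ht0.le,
      ← mul_assoc, ← rpow_add (by positivity), neg_add_cancel, rpow_zero, one_mul]
  rw [hsplit]
  gcongr
  calc u ^ (-e) ≤ u ^ |e| := rpow_le_rpow_of_exponent_le hu1 (neg_le_abs e)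
    _ ≤ 2 ^ |e| := rpow_le_rpow (by positivity) hu2 (abs_nonneg e)

lemma sum_pow_div_factorial_le_exp {x : ℝ} (hx : 0 ≤ x) (T : Finset ℕ) :
    ∑ n ∈ T, x ^ n / n ! ≤ exp x :=
  (sum_le_sum_of_subset_of_nonneg T.subset_range_sup_succ fun _ _ _ ↦ by positivity).trans
    (sum_le_exp_of_nonneg hx _)

lemma sum_pow_div_factorial_add_succ_le {x : ℝ} (hx : 0 ≤ x) (T : Finset ℕ) :
    ∑ n ∈ T, 2 * (x ^ n / n ! + x ^ (n + 1) / (n + 1)!) ≤ 4 * exp x := by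
  have hsucc := sum_pow_div_factorial_le_exp hx (T.image (· + 1))
  rw [sum_image fun _ _ _ _ h ↦ Nat.succ_injective h] at hsucc
  rw [← mul_sum, sum_add_distrib]
  linarith [sum_pow_div_factorial_le_exp hx T]

lemma rpow_div_Gamma_add_one_le {s a : ℝ} (hs : 1 ≤ s) (ha : -1 < a) :
    s ^ a / Gamma (a + 1) ≤ 2 * (s ^ ⌊a⌋₊ / ⌊a⌋₊ ! + s ^ (⌊a⌋₊ + 1) / (⌊a⌋₊ + 1)!) := by
  have hs0 : 0 < s := by linarith
  rcases lt_or_ge a 0 with ha0 | ha0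
  · have hΓ : 1 ≤ Gamma (a + 1) := one_le_Gamma_of_le_one (by linarith) (by linarith)
    rw [Nat.floor_eq_zero.2 (by linarith)]
    calc s ^ a / Gamma (a + 1) ≤ 1 :=
          div_le_one_of_le₀ ((rpow_le_one_of_one_le_of_nonpos hs ha0.le).trans hΓ)
            (by linarith)
      _ ≤ 2 * (s ^ 0 / (0 : ℕ)! + s ^ (0 + 1) / (0 + 1)!) := by norm_num; linarith
  set n := ⌊a⌋₊
  set θ := a - n
  have hθ0 : 0 ≤ θ := sub_nonneg.2 (Nat.floor_le ha0)
  have hθ1 : θ ≤ 1 := by have := Nat.lt_floor_add_one a; linarith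
  have hn : (0 : ℝ) < n + 1 := by positivity
  have hΓ := factorial_mul_rpow_le_two_mul_Gamma n hθ0 hθ1
  rw [show (n : ℝ) + 1 + θ = a + 1 by ring] at hΓ
  have hsa : s ^ a = s ^ n * s ^ θ := by
    rw [← rpow_natCast, ← rpow_add hs0, add_sub_cancel]
  calc s ^ a / Gamma (a + 1)
      ≤ s ^ a / (n ! * ((n : ℝ) + 1) ^ θ / 2) :=
        div_le_div_of_nonneg_left (by positivity) (by positivity) (by linarith)
    _ = 2 * (s ^ n / n !) * (s / (n + 1)) ^ θ := by
        rw [hsa, div_rpow hs0.le hn.le]; field_simp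
    _ ≤ 2 * (s ^ n / n !) * (1 + s / (n + 1)) := by
        gcongr; exact rpow_le_one_add (by positivity) hθ0 hθ1
    _ = 2 * (s ^ n / n ! + s ^ (n + 1) / (n + 1)!) := by
        rw [factorial_succ]; push_cast; field_simp; ring

end Real

lemma Finset.sum_comp_le_mul_sum_image {ι κ R : Type*} [DecidableEq κ] [Semiring R]
    [PartialOrder R] [IsOrderedRing R] (s : Finset ι) (f : ι → κ) {g : κ → R}
    (hg : ∀ j, 0 ≤ g j) {M : ℕ} (hM : ∀ j, #{i ∈ s | f i = j} ≤ M) :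
    ∑ i ∈ s, g (f i) ≤ M * ∑ j ∈ s.image f, g j := by
  rw [sum_comp, mul_sum]
  gcongr with j
  rw [nsmul_eq_mul]
  exact mul_le_mul_of_nonneg_right (Nat.mono_cast (hM j)) (hg j)

lemma card_filter_mul_mem_Ico_le {β : ℝ} (hβ : 0 < β) (K : Finset ℕ) (x L : ℝ) :
    #{k ∈ K | β * (k : ℕ) ∈ Set.Ico x (x + L)} ≤ ⌈L / β⌉₊ := by
  calc #{k ∈ K | β * (k : ℕ) ∈ Set.Ico x (x + L)}
      ≤ #(Ico ⌈x / β⌉₊ ⌈(x + L) / β⌉₊) := by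
        refine card_le_card fun k hk ↦ ?_
        simp only [mem_filter, Set.mem_Ico] at hk
        rw [Finset.mem_Ico, Nat.ceil_le, Nat.lt_ceil, div_le_iff₀ hβ, lt_div_iff₀ hβ]
        constructor <;> linarith
    _ = ⌈(x + L) / β⌉₊ - ⌈x / β⌉₊ := Nat.card_Ico _ _
    _ ≤ ⌈L / β⌉₊ := by
        have := Nat.ceil_add_le (x / β) (L / β)
        rw [add_div]
        omega

-- The window has length `2`, not `1`, because `⌊·⌋₊` sends all of `(-1, 1)` to `0`.
lemma card_filter_floor_mul_add_eq_le {β c : ℝ} (hβ : 0 < β) (hc : -1 < c) (K : Finset ℕ)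
    (n : ℕ) : #{k ∈ K | ⌊β * (k : ℕ) + c⌋₊ = n} ≤ ⌈2 / β⌉₊ := by
  refine le_trans (card_le_card fun k hk ↦ ?_) (card_filter_mul_mem_Ico_le hβ K (n - 1 - c) 2)
  simp only [mem_filter, Set.mem_Ico] at hk ⊢
  obtain ⟨hkK, rfl⟩ := hk
  have hk : 0 ≤ β * (k : ℝ) := by positivity
  refine ⟨hkK, ?_, ?_⟩
  · rcases le_or_gt 0 (β * k + c) with hy | hy
    · linarith [Nat.floor_le hy]
    · rw [Nat.floor_of_nonpos hy.le]; push_cast; linarith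
  · linarith [Nat.lt_floor_add_one (β * k + c)]

lemma sum_rpow_mul_div_Gamma_le {β ρ s : ℝ} (hβ : 0 < β) (hρ : 0 < ρ) (hs : 1 ≤ s)
    (K : Finset ℕ) :
    ∑ k ∈ K, s ^ (β * k) / Gamma (β * k + ρ) ≤ 4 * ⌈2 / β⌉₊ * s ^ (1 - ρ) * exp s := by
  have hs0 : 0 < s := by linarith
  let a : ℕ → ℝ := fun k ↦ β * k + (ρ - 1)
  let g : ℕ → ℝ := fun n ↦ 2 * (s ^ n / n ! + s ^ (n + 1) / (n + 1)!)
  have ha (k : ℕ) : -1 < a k := by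
    have : 0 ≤ β * (k : ℝ) := by positivity
    simp only [a]; linarith
  have hterm (k : ℕ) : s ^ (β * k) / Gamma (β * k + ρ) ≤ s ^ (1 - ρ) * g ⌊a k⌋₊ := by
    have h := rpow_div_Gamma_add_one_le hs (ha k)
    rw [show a k + 1 = β * k + ρ by ring] at h
    calc s ^ (β * k) / Gamma (β * k + ρ) = s ^ (1 - ρ) * (s ^ a k / Gamma (β * k + ρ)) := by
          rw [← mul_div_assoc, ← rpow_add hs0]; simp only [a]; ring_nf
      _ ≤ s ^ (1 - ρ) * g ⌊a k⌋₊ := by gcongr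
  calc ∑ k ∈ K, s ^ (β * k) / Gamma (β * k + ρ)
      ≤ s ^ (1 - ρ) * ∑ k ∈ K, g ⌊a k⌋₊ := by rw [mul_sum]; exact sum_le_sum fun k _ ↦ hterm k
    _ ≤ s ^ (1 - ρ) * (⌈2 / β⌉₊ * ∑ n ∈ K.image (⌊a ·⌋₊), g n) := by
        gcongr
        exact sum_comp_le_mul_sum_image K _ (fun n ↦ by positivity)
          (card_filter_floor_mul_add_eq_le hβ (by linarith) K)
    _ ≤ s ^ (1 - ρ) * (⌈2 / β⌉₊ * (4 * exp s)) := by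
        gcongr; exact sum_pow_div_factorial_add_succ_le hs0.le _
    _ = 4 * ⌈2 / β⌉₊ * s ^ (1 - ρ) * exp s := by ring

lemma mittagLeffler_term_nonneg {β ρ t : ℝ} (hβ : 0 ≤ β) (hρ : 0 < ρ) (ht : 0 ≤ t) (k : ℕ) :
    0 ≤ t ^ k / Gamma (β * k + ρ) :=
  div_nonneg (pow_nonneg ht k) (Gamma_pos_of_pos (by positivity)).le

lemma mittagLeffler_nonneg {β ρ t : ℝ} (hβ : 0 ≤ β) (hρ : 0 < ρ) (ht : 0 ≤ t) :
    0 ≤ mittagLeffler β ρ t :=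
  tsum_nonneg (mittagLeffler_term_nonneg hβ hρ ht)

lemma mittagLeffler_le_of_one_le {β ρ t : ℝ} (hβ : 0 < β) (hρ : 0 < ρ) (ht : 1 ≤ t) :
    mittagLeffler β ρ t ≤ 4 * ⌈2 / β⌉₊ * t ^ ((1 - ρ) / β) * exp (t ^ (1 / β)) := by
  have ht0 : 0 ≤ t := by linarith
  have hpow (x : ℝ) : (t ^ (1 / β)) ^ (β * x) = t ^ x := by
    rw [← rpow_mul ht0]; field_simp
  refine tsum_le_of_sum_le (mittagLeffler_term_nonneg hβ.le hρ ht0) fun K ↦ ?_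
  have h := sum_rpow_mul_div_Gamma_le hβ hρ (one_le_rpow ht (by positivity : 0 ≤ 1 / β)) K
  rwa [← rpow_mul ht0, one_div_mul_eq_div, Finset.sum_congr rfl fun k _ ↦ by
    rw [hpow, rpow_natCast]] at h

lemma mittagLeffler_le_of_le_one {β ρ t : ℝ} (hβ : 0 < β) (hρ : 0 < ρ) (ht0 : 0 ≤ t)
    (ht1 : t ≤ 1) : mittagLeffler β ρ t ≤ 4 * ⌈2 / β⌉₊ * exp 1 := by
  refine tsum_le_of_sum_le (mittagLeffler_term_nonneg hβ.le hρ ht0) fun K ↦ ?_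
  have h := sum_rpow_mul_div_Gamma_le hβ hρ le_rfl K
  simp only [one_rpow, mul_one] at h
  refine le_trans (sum_le_sum fun k _ ↦ ?_) h
  exact div_le_div_of_nonneg_right (pow_le_one₀ ht0 ht1) (Gamma_pos_of_pos (by positivity)).le

theorem mittagLeffler_growth_bound_general (β ρ : ℝ) (hβ0 : 0 < β) (hρ : 0 < ρ) :
    ∃ C₁ > (0:ℝ), ∃ C₂ > (0:ℝ), ∀ t > (0:ℝ),
      |mittagLeffler β ρ t| ≤
        C₁ * (1 + t) ^ ((1 - ρ) / β) * Real.exp (t ^ (1 / β)) + C₂ / (1 + t) := by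
  set C : ℝ := 4 * ⌈2 / β⌉₊
  have hC : 0 < C := by have := Nat.ceil_pos.2 (div_pos two_pos hβ0); positivity
  refine ⟨C * 2 ^ |(1 - ρ) / β|, by positivity, 2 * C * exp 1, by positivity, fun t ht ↦ ?_⟩
  rw [abs_of_nonneg (mittagLeffler_nonneg hβ0.le hρ ht.le)]
  rcases le_or_gt 1 t with ht1 | ht1
  · calc mittagLeffler β ρ t ≤ C * t ^ ((1 - ρ) / β) * exp (t ^ (1 / β)) :=
          mittagLeffler_le_of_one_le hβ0 hρ ht1
      _ ≤ C * (2 ^ |(1 - ρ) / β| * (1 + t) ^ ((1 - ρ) / β)) * exp (t ^ (1 / β)) := by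
          gcongr; exact rpow_le_two_rpow_abs_mul_one_add_rpow ht1 _
      _ ≤ _ := by rw [← mul_assoc]; exact le_add_of_nonneg_right (by positivity)
  · calc mittagLeffler β ρ t ≤ C * exp 1 := mittagLeffler_le_of_le_one hβ0 hρ ht.le ht1.le
      _ ≤ 2 * C * exp 1 / (1 + t) := by
          rw [le_div_iff₀ (by positivity), mul_assoc 2, mul_comm 2]
          gcongr
          linarith
      _ ≤ _ := le_add_of_nonneg_left (by positivity)

/-- For `β ∈ (0,1)` and `ρ > 0` there are `C₁, C₂ > 0` with
`|E_{β,ρ}(t)| ≤ C₁ (1+t)^{(1−ρ)/β} e^{t^{1/β}} + C₂/(1+t)` for all `t > 0`. -/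
theorem mittagLeffler_growth_bound (β ρ : ℝ) (hβ0 : 0 < β) (hβ1 : β < 1) (hρ : 0 < ρ) :
    ∃ C₁ > (0:ℝ), ∃ C₂ > (0:ℝ), ∀ t > (0:ℝ),
      |mittagLeffler β ρ t| ≤
        C₁ * (1 + t) ^ ((1 - ρ) / β) * Real.exp (t ^ (1 / β)) + C₂ / (1 + t) :=
  mittagLeffler_growth_bound_general β ρ hβ0 hρ
end

section
/- Let β ∈ (0,1), ρ > 0, a ∈ ℝ, and set y_{β,ρ}(t) = t^{ρ−1} E_{β,ρ}(a t^β). Then for every real λ > 0 with λ^β > |a|, the Laplace transform of y_{β,ρ} is defined and satisfies L[y_{β,ρ}](λ) = ∫₀^∞ t^{ρ−1} E_{β,ρ}(a t^β) e^{−λt} dt = λ^{β−ρ} / (λ^β − a). -/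
open MeasureTheory Real Set
open scoped ENNReal

theorem MeasureTheory.integrable_tsum_of_summable_integral_norm {ι α E : Type*} [Countable ι]
    [MeasurableSpace α] {μ : Measure α} [NormedAddCommGroup E] [CompleteSpace E]
    [SecondCountableTopology E] [MeasurableSpace E] [BorelSpace E] {F : ι → α → E}
    (hF_int : ∀ i, Integrable (F i) μ) (hF_sum : Summable fun i ↦ ∫ a, ‖F i a‖ ∂μ) :
    Integrable (fun a ↦ ∑' i, F i a) μ := by
  refine ⟨(AEMeasurable.tsum fun i ↦ (hF_int i).aemeasurable).aestronglyMeasurable, ?_⟩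
  have h_lintegral (i : ι) : ∫⁻ a, ‖F i a‖ₑ ∂μ = ENNReal.ofReal (∫ a, ‖F i a‖ ∂μ) :=
    (ofReal_integral_norm_eq_lintegral_enorm (hF_int i)).symm
  calc ∫⁻ a, ‖∑' i, F i a‖ₑ ∂μ ≤ ∫⁻ a, ∑' i, ‖F i a‖ₑ ∂μ :=
        lintegral_mono fun _ ↦ enorm_tsum_le_tsum_enorm
    _ = ∑' i, ∫⁻ a, ‖F i a‖ₑ ∂μ := lintegral_tsum fun i ↦ (hF_int i).aestronglyMeasurable.enorm
    _ = ENNReal.ofReal (∑' i, ∫ a, ‖F i a‖ ∂μ) := by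
        simp_rw [h_lintegral]
        exact (ENNReal.ofReal_tsum_of_nonneg (fun i ↦ integral_nonneg fun _ ↦ norm_nonneg _)
          hF_sum).symm
    _ < ∞ := ENNReal.ofReal_lt_top

section GammaKernel

variable {s l : ℝ}

theorem integrableOn_rpow_mul_exp_neg_mul_div_Gamma (hs : 0 < s) (hl : 0 < l) :
    IntegrableOn (fun t ↦ t ^ (s - 1) * exp (-(l * t)) / Gamma s) (Ioi 0) := by
  have h := integrableOn_rpow_mul_exp_neg_mul_rpow (by linarith : -1 < s - 1) one_pos hl
  simp only [rpow_one, neg_mul] at h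
  exact h.div_const (Gamma s)

theorem integral_rpow_mul_exp_neg_mul_div_Gamma (hs : 0 < s) (hl : 0 < l) :
    ∫ t in Ioi 0, t ^ (s - 1) * exp (-(l * t)) / Gamma s = (1 / l) ^ s := by
  rw [integral_div, integral_rpow_mul_exp_neg_mul_Ioi hs hl, mul_div_cancel_right₀ _
    (Gamma_pos_of_pos hs).ne']

theorem integral_norm_mul_rpow_mul_exp_neg_mul_div_Gamma (c : ℝ) (hs : 0 < s) (hl : 0 < l) :
    ∫ t in Ioi 0, ‖c * (t ^ (s - 1) * exp (-(l * t)) / Gamma s)‖ = |c| * (1 / l) ^ s := by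
  have h_norm : EqOn (fun t ↦ ‖c * (t ^ (s - 1) * exp (-(l * t)) / Gamma s)‖)
      (fun t ↦ |c| * (t ^ (s - 1) * exp (-(l * t)) / Gamma s)) (Ioi 0) := fun t ht ↦ by
    have : 0 ≤ t ^ (s - 1) * exp (-(l * t)) / Gamma s :=
      div_nonneg (mul_nonneg (rpow_nonneg ht.le _) (exp_pos _).le)
        (Gamma_pos_of_pos hs).le
    simp only [norm_mul, norm_eq_abs, abs_of_nonneg this]
  rw [setIntegral_congr_fun measurableSet_Ioi h_norm, integral_const_mul,
    integral_rpow_mul_exp_neg_mul_div_Gamma hs hl]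

end GammaKernel

section LaplaceSeries

variable {c s : ℕ → ℝ} {l : ℝ}

theorem summable_integral_norm_mul_rpow_mul_exp_neg_mul_div_Gamma (hs : ∀ k, 0 < s k)
    (hl : 0 < l) (hc : Summable fun k ↦ |c k| * (1 / l) ^ s k) :
    Summable fun k ↦ ∫ t in Ioi 0, ‖c k * (t ^ (s k - 1) * exp (-(l * t)) / Gamma (s k))‖ := by
  simpa only [integral_norm_mul_rpow_mul_exp_neg_mul_div_Gamma _ (hs _) hl] using hc

theorem integrableOn_tsum_mul_rpow_mul_exp_neg_mul_div_Gamma (hs : ∀ k, 0 < s k) (hl : 0 < l)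
    (hc : Summable fun k ↦ |c k| * (1 / l) ^ s k) :
    IntegrableOn (fun t ↦ ∑' k, c k * (t ^ (s k - 1) * exp (-(l * t)) / Gamma (s k))) (Ioi 0) :=
  integrable_tsum_of_summable_integral_norm
    (fun k ↦ (integrableOn_rpow_mul_exp_neg_mul_div_Gamma (hs k) hl).const_mul (c k))
    (summable_integral_norm_mul_rpow_mul_exp_neg_mul_div_Gamma hs hl hc)

theorem hasSum_integral_tsum_mul_rpow_mul_exp_neg_mul_div_Gamma (hs : ∀ k, 0 < s k) (hl : 0 < l)
    (hc : Summable fun k ↦ |c k| * (1 / l) ^ s k) :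
    HasSum (fun k ↦ c k * (1 / l) ^ s k)
      (∫ t in Ioi 0, ∑' k, c k * (t ^ (s k - 1) * exp (-(l * t)) / Gamma (s k))) := by
  have h := hasSum_integral_of_summable_integral_norm
    (fun k ↦ (integrableOn_rpow_mul_exp_neg_mul_div_Gamma (hs k) hl).const_mul (c k))
    (summable_integral_norm_mul_rpow_mul_exp_neg_mul_div_Gamma hs hl hc)
  simpa only [integral_const_mul, integral_rpow_mul_exp_neg_mul_div_Gamma (hs _) hl] using h

end LaplaceSeries

theorem hasSum_pow_mul_one_div_rpow_mul_add {β ρ a l : ℝ} (hl : 0 < l) (ha : |a| < l ^ β) :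
    HasSum (fun k : ℕ ↦ a ^ k * (1 / l) ^ (β * k + ρ)) (l ^ (β - ρ) / (l ^ β - a)) := by
  have hlβ : 0 < l ^ β := rpow_pos_of_pos hl β
  have hr : |a / l ^ β| < 1 := by
    rwa [abs_div, abs_of_pos hlβ, div_lt_one hlβ]
  have h_term (k : ℕ) : a ^ k * (1 / l) ^ (β * k + ρ) = (1 / l) ^ ρ * (a / l ^ β) ^ k := by
    rw [rpow_add (one_div_pos.mpr hl), rpow_mul (one_div_nonneg.mpr hl.le), rpow_natCast,
      div_rpow zero_le_one hl.le, one_rpow, div_pow, one_pow]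
    ring
  have h_sum : (1 / l) ^ ρ * (1 - a / l ^ β)⁻¹ = l ^ (β - ρ) / (l ^ β - a) := by
    have : l ^ β - a ≠ 0 := by linarith [le_abs_self a]
    rw [rpow_sub hl, div_rpow zero_le_one hl.le, one_rpow]
    field_simp
  simpa only [h_term, h_sum] using (hasSum_geometric_of_abs_lt_one hr).mul_left ((1 / l) ^ ρ)

theorem rpow_mul_mittagLeffler_mul_exp_eq_tsum {β ρ a l t : ℝ} (ht : 0 < t) :
    t ^ (ρ - 1) * mittagLeffler β ρ (a * t ^ β) * exp (-l * t) =
      ∑' k : ℕ, a ^ k * (t ^ (β * k + ρ - 1) * exp (-(l * t)) / Gamma (β * k + ρ)) := by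
  have h_pow (k : ℕ) : t ^ (β * k + ρ - 1) = (t ^ β) ^ k * t ^ (ρ - 1) := by
    rw [add_sub_assoc, rpow_add ht, rpow_mul ht.le, rpow_natCast]
  simp_rw [h_pow, mittagLeffler, ← tsum_mul_left, ← tsum_mul_right]
  congr 1 with k
  rw [neg_mul]
  ring

theorem mittagLeffler_laplace_general (β ρ a : ℝ) (hβ0 : 0 < β) (hρ : 0 < ρ) :
    ∀ l > (0:ℝ), |a| < l ^ β →
      MeasureTheory.IntegrableOn
        (fun t : ℝ => t ^ (ρ - 1) * mittagLeffler β ρ (a * t ^ β) * Real.exp (-l * t))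
        (Set.Ioi 0) ∧
      (∫ t in Set.Ioi (0:ℝ),
          t ^ (ρ - 1) * mittagLeffler β ρ (a * t ^ β) * Real.exp (-l * t))
        = l ^ (β - ρ) / (l ^ β - a) := by
  intro l hl ha
  have hs (k : ℕ) : 0 < β * k + ρ := by positivity
  have h_abs : Summable fun k : ℕ ↦ |a ^ k| * (1 / l) ^ (β * k + ρ) := by
    simpa only [abs_pow] using
      (hasSum_pow_mul_one_div_rpow_mul_add (ρ := ρ) hl (by rwa [abs_abs])).summable
  have h_series : EqOn
      (fun t ↦ ∑' k : ℕ, a ^ k * (t ^ (β * k + ρ - 1) * exp (-(l * t)) / Gamma (β * k + ρ)))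
      (fun t ↦ t ^ (ρ - 1) * mittagLeffler β ρ (a * t ^ β) * exp (-l * t)) (Ioi 0) :=
    fun t ht ↦ (rpow_mul_mittagLeffler_mul_exp_eq_tsum ht).symm
  refine ⟨(integrableOn_tsum_mul_rpow_mul_exp_neg_mul_div_Gamma hs hl h_abs).congr_fun h_series
    measurableSet_Ioi, ?_⟩
  rw [← setIntegral_congr_fun measurableSet_Ioi h_series]
  exact (hasSum_integral_tsum_mul_rpow_mul_exp_neg_mul_div_Gamma hs hl h_abs).unique
    (hasSum_pow_mul_one_div_rpow_mul_add hl ha)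

/-- For `β ∈ (0,1)`, `ρ > 0`, `a ∈ ℝ`, and `y_{β,ρ}(t) = t^{ρ−1} E_{β,ρ}(a t^β)`,
the Laplace transform of `y_{β,ρ}` is defined for every real `λ > 0` with
`λ^β > |a|` and `L[y_{β,ρ}](λ) = λ^{β−ρ}/(λ^β − a)`. -/
theorem mittagLeffler_laplace (β ρ a : ℝ) (hβ0 : 0 < β) (hβ1 : β < 1) (hρ : 0 < ρ) :
    ∀ l > (0:ℝ), |a| < l ^ β →
      MeasureTheory.IntegrableOn
        (fun t : ℝ => t ^ (ρ - 1) * mittagLeffler β ρ (a * t ^ β) * Real.exp (-l * t))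
        (Set.Ioi 0) ∧
      (∫ t in Set.Ioi (0:ℝ),
          t ^ (ρ - 1) * mittagLeffler β ρ (a * t ^ β) * Real.exp (-l * t))
        = l ^ (β - ρ) / (l ^ β - a) :=
  mittagLeffler_laplace_general β ρ a hβ0 hρ
end

section
/- Let β ∈ (0,1), ρ > 0, γ > 0, and a ∈ ℝ. Then for every t > 0, (1/Γ(γ)) ∫₀ᵗ (t−s)^{γ−1} s^{ρ−1} E_{β,ρ}(a s^β) ds = t^{ρ+γ−1} E_{β,ρ+γ}(a t^β). -/
/-! Expand `E_{β,ρ}(a s^β)` termwise: the `k`-th term of the integrand is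
`a^k / Γ(βk+ρ) · s^{βk+ρ-1} (t-s)^{γ-1}`, whose integral over `[0,t]` is a Beta integral,
`Γ(βk+ρ) Γ(γ) / Γ(βk+ρ+γ) · t^{βk+ρ+γ-1}`; this turns the `k`-th term of `E_{β,ρ}` into the
`k`-th term of `Γ(γ) t^{ρ+γ-1} E_{β,ρ+γ}(a t^β)`. Summation and integration may be swapped because
the same computation with `|a|` in place of `a` turns the integrals of the absolute values into the
terms of the convergent series `E_{β,ρ+γ}(|a| t^β)`; its convergence follows from the ratio test,
since log-convexity of `Γ` gives `Γ(x+β) ≥ (x-1)^β Γ(x)`. -/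

open Real Set Filter Topology MeasureTheory

/-- The slope of `log ∘ Γ` on `[x-1, x]` is `log (x-1)`; by convexity it bounds the slope
on `[x, x+β]`. -/
theorem Real.rpow_mul_Gamma_le_Gamma_add {x β : ℝ} (hx : 1 < x) (hβ : 0 < β) :
    (x - 1) ^ β * Gamma x ≤ Gamma (x + β) := by
  have hslope := convexOn_log_Gamma.slope_mono_adjacent (x := x - 1) (y := x) (z := x + β)
    (mem_Ioi.2 (by linarith)) (mem_Ioi.2 (by linarith)) (by linarith) (by linarith)
  have hrec : Gamma x = (x - 1) * Gamma (x - 1) := by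
    simpa using Gamma_add_one (s := x - 1) (by linarith)
  have hΓ : 0 < Gamma (x - 1) := Gamma_pos_of_pos (by linarith)
  simp only [Function.comp_apply, hrec, log_mul (by linarith : x - 1 ≠ 0) hΓ.ne',
    show x + β - x = β by ring, show x - (x - 1) = 1 by ring] at hslope
  rw [← log_le_log_iff (by positivity) (Gamma_pos_of_pos (by linarith)), hrec,
    log_mul (by positivity) (by positivity), log_rpow (by linarith),
    log_mul (by linarith) hΓ.ne']
  rw [div_one, le_div_iff₀ hβ] at hslope
  nlinarith

theorem summable_pow_div_Gamma {β : ℝ} (hβ : 0 < β) (c z : ℝ) :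
    Summable fun k : ℕ => z ^ k / Gamma (β * k + c) := by
  have hx : Tendsto (fun k : ℕ => β * k + c - 1) atTop atTop :=
    tendsto_atTop_add_const_right _ _ (tendsto_atTop_add_const_right _ _
      (tendsto_natCast_atTop_atTop.const_mul_atTop hβ))
  refine summable_of_ratio_norm_eventually_le (r := 1 / 2) (by norm_num) ?_
  filter_upwards [hx.eventually_gt_atTop 0,
    ((tendsto_rpow_atTop hβ).comp hx).eventually_ge_atTop (2 * |z|)] with k hk hz
  rw [Function.comp_apply] at hz
  set x := β * k + c
  have hΓ : 0 < Gamma x := Gamma_pos_of_pos (by linarith)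
  have hΓβ : 0 < Gamma (x + β) := Gamma_pos_of_pos (by linarith)
  have hgrowth : 2 * |z| * Gamma x ≤ Gamma (x + β) :=
    calc 2 * |z| * Gamma x ≤ (x - 1) ^ β * Gamma x := by gcongr
      _ ≤ Gamma (x + β) := Real.rpow_mul_Gamma_le_Gamma_add (by linarith) hβ
  have hratio : |z| / Gamma (x + β) ≤ 1 / (2 * Gamma x) := by
    rw [div_le_div_iff₀ hΓβ (by positivity)]
    linarith
  rw [show β * ↑(k + 1) + c = x + β by push_cast; ring]
  simp only [norm_div, norm_pow, Real.norm_eq_abs, abs_of_pos hΓ, abs_of_pos hΓβ]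
  calc |z| ^ (k + 1) / Gamma (x + β) = |z| ^ k * (|z| / Gamma (x + β)) := by ring
    _ ≤ |z| ^ k * (1 / (2 * Gamma x)) := by gcongr
    _ = 1 / 2 * (|z| ^ k / Gamma x) := by ring

theorem integral_rpow_mul_rpow_sub {u v t : ℝ} (hu : 0 < u) (hv : 0 < v) (ht : 0 < t) :
    ∫ s in 0..t, s ^ (u - 1) * (t - s) ^ (v - 1) =
      Gamma u * Gamma v / Gamma (u + v) * t ^ (u + v - 1) := by
  have hbeta : Complex.betaIntegral u v = Gamma u * Gamma v / Gamma (u + v) := by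
    have hΓ : (Gamma (u + v) : ℂ) ≠ 0 := by exact_mod_cast (Gamma_pos_of_pos (add_pos hu hv)).ne'
    rw [eq_div_iff hΓ]
    simpa [← Complex.ofReal_add, Complex.Gamma_ofReal, mul_comm] using
      (Complex.Gamma_mul_Gamma_eq_betaIntegral (s := u) (t := v) (by simpa) (by simpa)).symm
  have hscaled := Complex.betaIntegral_scaled u v ht
  rw [hbeta] at hscaled
  apply Complex.ofReal_injective
  rw [← intervalIntegral.integral_ofReal, Complex.ofReal_mul, Complex.ofReal_cpow ht.le, mul_comm]
  push_cast
  rw [← hscaled]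
  refine intervalIntegral.integral_congr fun s hs => ?_
  rw [uIcc_of_le ht.le] at hs
  simp only [Complex.ofReal_cpow hs.1, Complex.ofReal_cpow (sub_nonneg.2 hs.2)]
  push_cast
  rfl

theorem intervalIntegrable_rpow_mul_rpow_sub {u v t : ℝ} (hu : 0 < u) (hv : 0 < v) (ht : 0 < t) :
    IntervalIntegrable (fun s => s ^ (u - 1) * (t - s) ^ (v - 1)) volume 0 t := by
  -- A non-integrable function has integral `0`, while this integral is positive.
  refine intervalIntegral.intervalIntegrable_of_integral_ne_zero ?_
  rw [integral_rpow_mul_rpow_sub hu hv ht]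
  have := Gamma_pos_of_pos hu
  have := Gamma_pos_of_pos hv
  have := Gamma_pos_of_pos (add_pos hu hv)
  positivity

theorem intervalIntegral.hasSum_integral_of_summable_integral_norm {E : Type*}
    [NormedAddCommGroup E] [NormedSpace ℝ E] {ι : Type*} [Countable ι] {F : ι → ℝ → E}
    {a b : ℝ} (hab : a ≤ b) (hF_int : ∀ i, IntervalIntegrable (F i) volume a b)
    (hF_sum : Summable fun i => ∫ x in a..b, ‖F i x‖) :
    HasSum (fun i => ∫ x in a..b, F i x) (∫ x in a..b, ∑' i, F i x) := by
  simp only [intervalIntegral.integral_of_le hab] at hF_sum ⊢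
  exact MeasureTheory.hasSum_integral_of_summable_integral_norm (fun i => (hF_int i).1) hF_sum

section MittagLefflerTerm

variable {β ρ γ t : ℝ}

theorem mittagLefflerTerm_eqOn (ht : 0 ≤ t) (a : ℝ) (k : ℕ) :
    EqOn (fun s => (t - s) ^ (γ - 1) * (s ^ (ρ - 1) * ((a * s ^ β) ^ k / Gamma (β * k + ρ))))
      (fun s => a ^ k / Gamma (β * k + ρ) * (s ^ (β * k + ρ - 1) * (t - s) ^ (γ - 1)))
      (uIoc 0 t) := by
  intro s hs
  rw [uIoc_of_le ht] at hs
  simp only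
  rw [mul_pow, ← rpow_natCast (s ^ β), ← rpow_mul hs.1.le,
    show β * k + ρ - 1 = β * k + (ρ - 1) by ring, rpow_add hs.1]
  ring

theorem intervalIntegrable_mittagLefflerTerm (hβ : 0 ≤ β) (hρ : 0 < ρ) (hγ : 0 < γ) (ht : 0 < t)
    (a : ℝ) (k : ℕ) :
    IntervalIntegrable
      (fun s => (t - s) ^ (γ - 1) * (s ^ (ρ - 1) * ((a * s ^ β) ^ k / Gamma (β * k + ρ))))
      volume 0 t :=
  (intervalIntegrable_congr (mittagLefflerTerm_eqOn ht.le a k)).2 <|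
    (intervalIntegrable_rpow_mul_rpow_sub (by positivity) hγ ht).const_mul _

theorem integral_mittagLefflerTerm (hβ : 0 ≤ β) (hρ : 0 < ρ) (hγ : 0 < γ) (ht : 0 < t)
    (a : ℝ) (k : ℕ) :
    ∫ s in 0..t, (t - s) ^ (γ - 1) * (s ^ (ρ - 1) * ((a * s ^ β) ^ k / Gamma (β * k + ρ))) =
      Gamma γ * t ^ (ρ + γ - 1) * ((a * t ^ β) ^ k / Gamma (β * k + (ρ + γ))) := by
  have hμ : 0 < β * k + ρ := by positivity
  rw [intervalIntegral.integral_congr_ae (ae_of_all _ (mittagLefflerTerm_eqOn ht.le a k)),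
    intervalIntegral.integral_const_mul, integral_rpow_mul_rpow_sub hμ hγ ht, mul_pow,
    ← rpow_natCast (t ^ β), ← rpow_mul ht.le, show β * k + ρ + γ - 1 = β * k + (ρ + γ - 1) by ring,
    rpow_add ht, show β * k + ρ + γ = β * k + (ρ + γ) by ring]
  field_simp [(Gamma_pos_of_pos hμ).ne']

theorem norm_mittagLefflerTerm (hβ : 0 ≤ β) (hρ : 0 < ρ) {s : ℝ} (hs : 0 ≤ s) (hst : s ≤ t)
    (a : ℝ) (k : ℕ) :
    ‖(t - s) ^ (γ - 1) * (s ^ (ρ - 1) * ((a * s ^ β) ^ k / Gamma (β * k + ρ)))‖ =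
      (t - s) ^ (γ - 1) * (s ^ (ρ - 1) * ((|a| * s ^ β) ^ k / Gamma (β * k + ρ))) := by
  have hΓ : 0 < Gamma (β * k + ρ) := Gamma_pos_of_pos (by positivity)
  simp only [norm_mul, norm_div, norm_pow, Real.norm_eq_abs, abs_of_pos hΓ,
    abs_of_nonneg (rpow_nonneg hs _), abs_of_nonneg (rpow_nonneg (sub_nonneg.2 hst) _)]

theorem summable_integral_norm_mittagLefflerTerm (hβ : 0 < β) (hρ : 0 < ρ) (hγ : 0 < γ)
    (ht : 0 < t) (a : ℝ) :
    Summable fun k : ℕ => ∫ s in 0..t,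
      ‖(t - s) ^ (γ - 1) * (s ^ (ρ - 1) * ((a * s ^ β) ^ k / Gamma (β * k + ρ)))‖ := by
  have hnorm (k : ℕ) : ∫ s in 0..t,
      ‖(t - s) ^ (γ - 1) * (s ^ (ρ - 1) * ((a * s ^ β) ^ k / Gamma (β * k + ρ)))‖ =
        Gamma γ * t ^ (ρ + γ - 1) * ((|a| * t ^ β) ^ k / Gamma (β * k + (ρ + γ))) := by
    rw [← integral_mittagLefflerTerm hβ.le hρ hγ ht |a| k]
    refine intervalIntegral.integral_congr fun s hs => ?_
    rw [uIcc_of_le ht.le] at hs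
    exact norm_mittagLefflerTerm hβ.le hρ hs.1 hs.2 a k
  simpa only [hnorm] using (summable_pow_div_Gamma hβ _ _).mul_left _

end MittagLefflerTerm

theorem mittagLeffler_convolution_general (β ρ γ a : ℝ)
    (hβ0 : 0 < β) (hρ : 0 < ρ) (hγ : 0 < γ) :
    ∀ t > (0:ℝ),
      (1 / Real.Gamma γ) *
          ∫ s in (0:ℝ)..t, (t - s) ^ (γ - 1) * (s ^ (ρ - 1) * mittagLeffler β ρ (a * s ^ β))
        = t ^ (ρ + γ - 1) * mittagLeffler β (ρ + γ) (a * t ^ β) := by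
  intro t ht
  have hsum := intervalIntegral.hasSum_integral_of_summable_integral_norm ht.le
    (intervalIntegrable_mittagLefflerTerm hβ0.le hρ hγ ht a)
    (summable_integral_norm_mittagLefflerTerm hβ0 hρ hγ ht a)
  simp only [integral_mittagLefflerTerm hβ0.le hρ hγ ht, tsum_mul_left] at hsum
  simp only [mittagLeffler]
  rw [← hsum.tsum_eq, tsum_mul_left]
  field_simp [(Gamma_pos_of_pos hγ).ne']

/-- For `β ∈ (0,1)`, `ρ > 0`, `γ > 0`, `a ∈ ℝ`, and every `t > 0`,
`(1/Γ(γ)) ∫₀ᵗ (t−s)^{γ−1} s^{ρ−1} E_{β,ρ}(a s^β) ds = t^{ρ+γ−1} E_{β,ρ+γ}(a t^β)`. -/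
theorem mittagLeffler_convolution (β ρ γ a : ℝ)
    (hβ0 : 0 < β) (hβ1 : β < 1) (hρ : 0 < ρ) (hγ : 0 < γ) :
    ∀ t > (0:ℝ),
      (1 / Real.Gamma γ) *
          ∫ s in (0:ℝ)..t, (t - s) ^ (γ - 1) * (s ^ (ρ - 1) * mittagLeffler β ρ (a * s ^ β))
        = t ^ (ρ + γ - 1) * mittagLeffler β (ρ + γ) (a * t ^ β) :=
  mittagLeffler_convolution_general β ρ γ a hβ0 hρ hγ
end

section
/- Let β ∈ (0,1), γ ∈ (0,1), ρ > γ, and a ∈ ℝ, and set y_{β,ρ}(t) = t^{ρ−1} E_{β,ρ}(a t^β). Then for every t > 0, the function u(s) = I^{1−γ} y_{β,ρ}(s) = (1/Γ(1−γ)) ∫₀ˢ (s−r)^{−γ} y_{β,ρ}(r) dr is differentiable at t with u′(t) = t^{ρ−γ−1} E_{β,ρ−γ}(a t^β); that is, the Riemann–Liouville derivative satisfies D^γ y_{β,ρ}(t) = y_{β,ρ−γ}(t). -/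
/-- The Riemann–Liouville fractional integral
`I^p f(t) = (1/Γ(p)) ∫₀ᵗ (t−s)^{p−1} f(s) ds`. -/
noncomputable def rlInt (p : ℝ) (f : ℝ → ℝ) (t : ℝ) : ℝ :=
  (1 / Real.Gamma p) * ∫ s in (0:ℝ)..t, (t - s) ^ (p - 1) * f s

/-!
Expanding `E_{β,ρ}`, `y_{β,ρ}(r) = ∑ₖ aᵏ r^{βk+ρ-1} / Γ(βk+ρ)` is a series of powers, on each of
which the fractional integral acts by the Beta integral, `I^p r^{q-1} = Γ(q)/Γ(p+q) · s^{p+q-1}`.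
Absolute convergence, from the growth `Γ(y+β) ≥ (y-1)^β Γ(y)` that log-convexity of `Γ` gives,
justifies exchanging sum and integral; hence `I^{1-γ} y_{β,ρ} = y_{β,ρ+1-γ}`. Differentiating
`s^{βk+ρ-γ}/Γ(βk+ρ-γ+1)` term by term, with locally uniform bounds, gives `y_{β,ρ-γ}`.
-/

open Real MeasureTheory Filter Set Topology

theorem Real.rpow_sub_one_mul_Gamma_le_Gamma_add {β y : ℝ} (hβ : 0 < β) (hy : 1 < y) :
    (y - 1) ^ β * Gamma y ≤ Gamma (y + β) := by
  have hy0 : 0 < y - 1 := by linarith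
  have hΓ : 0 < Gamma y := Gamma_pos_of_pos (by linarith)
  have hlog : log (Gamma y) = log (y - 1) + log (Gamma (y - 1)) := by
    rw [← log_mul hy0.ne' (Gamma_pos_of_pos hy0).ne', ← Gamma_add_one hy0.ne', sub_add_cancel]
  have hslope := convexOn_log_Gamma.slope_mono_adjacent (mem_Ioi.2 hy0)
    (mem_Ioi.2 (by linarith : 0 < y + β)) (by linarith : y - 1 < y) (by linarith : y < y + β)
  simp only [Function.comp_apply, hlog, sub_sub_cancel, div_one, add_sub_cancel_left] at hslope
  rw [le_div_iff₀ hβ] at hslope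
  rw [← log_le_log_iff (by positivity) (Gamma_pos_of_pos (by linarith)),
    log_mul (by positivity) hΓ.ne', log_rpow hy0, hlog]
  linarith

theorem summable_pow_div_Gamma_mul_add {β : ℝ} (hβ : 0 < β) (c x : ℝ) :
    Summable fun k : ℕ => x ^ k / Gamma (β * k + c) := by
  have harg : Tendsto (fun k : ℕ => β * k + c) atTop atTop :=
    tendsto_atTop_add_const_right _ c (tendsto_natCast_atTop_atTop.const_mul_atTop hβ)
  have hgrowth : Tendsto (fun k : ℕ => (β * k + c - 1) ^ β) atTop atTop :=
    (tendsto_rpow_atTop hβ).comp (tendsto_atTop_add_const_right _ (-1) harg)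
  refine summable_of_ratio_norm_eventually_le (r := 1 / 2) (by norm_num) ?_
  filter_upwards [harg.eventually_gt_atTop 1, hgrowth.eventually_ge_atTop (2 * |x|)]
    with k hk hgrowth_k
  set y := β * k + c
  have hΓ : 0 < Gamma y := Gamma_pos_of_pos (by linarith)
  have hΓβ : 0 < Gamma (y + β) := Gamma_pos_of_pos (by linarith)
  have hratio : 2 * |x| * Gamma y ≤ Gamma (y + β) :=
    (mul_le_mul_of_nonneg_right hgrowth_k hΓ.le).trans (rpow_sub_one_mul_Gamma_le_Gamma_add hβ hk)
  rw [show β * ((k + 1 : ℕ) : ℝ) + c = y + β by push_cast; ring, norm_div, norm_div, norm_pow,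
    norm_pow, norm_of_nonneg hΓ.le, norm_of_nonneg hΓβ.le, Real.norm_eq_abs, div_le_iff₀ hΓβ]
  calc |x| ^ (k + 1) = 1 / 2 * (|x| ^ k / Gamma y) * (2 * |x| * Gamma y) := by
        field_simp; ring
    _ ≤ 1 / 2 * (|x| ^ k / Gamma y) * Gamma (y + β) := by gcongr

theorem rpow_mul_mittagLeffler {s : ℝ} (hs : 0 < s) (β c d a : ℝ) :
    s ^ d * mittagLeffler β c (a * s ^ β) =
      ∑' k : ℕ, a ^ k * s ^ (β * k + d) / Gamma (β * k + c) := by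
  rw [mittagLeffler, ← tsum_mul_left]
  congr 1 with k
  rw [mul_pow, ← rpow_mul_natCast hs.le, rpow_add hs]
  ring

theorem summable_pow_mul_rpow_div_Gamma {β : ℝ} (hβ : 0 < β) (c d x : ℝ) {s : ℝ} (hs : 0 < s) :
    Summable fun k : ℕ => x ^ k * s ^ (β * k + d) / Gamma (β * k + c) :=
  ((summable_pow_div_Gamma_mul_add hβ c (x * s ^ β)).mul_left (s ^ d)).congr fun k => by
    rw [mul_pow, ← rpow_mul_natCast hs.le, rpow_add hs]
    ring

theorem intervalIntegrable_sub_rpow_mul_rpow {p q s : ℝ} (hp : 0 < p) (hq : 0 < q) (hs : 0 < s) :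
    IntervalIntegrable (fun r => (s - r) ^ (p - 1) * r ^ (q - 1)) volume 0 s := by
  have hleft : IntervalIntegrable (fun r => (s - r) ^ (p - 1) * r ^ (q - 1)) volume 0 (s / 2) := by
    refine (intervalIntegral.intervalIntegrable_rpow' (by linarith)).continuousOn_mul ?_
    refine (continuousOn_const.sub continuousOn_id).rpow_const fun r hr => Or.inl ?_
    rw [uIcc_of_le (by linarith)] at hr
    simp only [Pi.sub_apply, id]
    linarith [hr.2]
  have hright : IntervalIntegrable (fun r => (s - r) ^ (p - 1) * r ^ (q - 1)) volume (s / 2) s := by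
    have hsub : IntervalIntegrable (fun r => (s - r) ^ (p - 1)) volume (s / 2) s := by
      simpa [sub_half] using
        ((intervalIntegral.intervalIntegrable_rpow' (a := 0) (b := s / 2)
          (by linarith : -1 < p - 1)).comp_sub_left s).symm
    refine hsub.mul_continuousOn (continuousOn_id.rpow_const fun r hr => Or.inl ?_)
    rw [uIcc_of_le (by linarith)] at hr
    exact (by linarith [hr.1] : (0:ℝ) < r).ne'
  exact hleft.trans hright

theorem integral_sub_rpow_mul_rpow {p q s : ℝ} (hp : 0 < p) (hq : 0 < q) (hs : 0 < s) :
    ∫ r in (0:ℝ)..s, (s - r) ^ (p - 1) * r ^ (q - 1) =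
      Gamma p * Gamma q / Gamma (p + q) * s ^ (p + q - 1) := by
  have hcpow {x e : ℝ} (hx : 0 ≤ x) : ((x ^ e : ℝ) : ℂ) = (x : ℂ) ^ (e : ℂ) :=
    Complex.ofReal_cpow hx e
  have hcomplex : ((∫ r in (0:ℝ)..s, (s - r) ^ (p - 1) * r ^ (q - 1) : ℝ) : ℂ) =
      ∫ r in (0:ℝ)..s, (r : ℂ) ^ ((q : ℂ) - 1) * ((s : ℂ) - r) ^ ((p : ℂ) - 1) := by
    rw [← intervalIntegral.integral_ofReal]
    refine intervalIntegral.integral_congr fun r hr => ?_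
    rw [uIcc_of_le hs.le] at hr
    simp only [Complex.ofReal_mul, hcpow hr.1, hcpow (sub_nonneg.2 hr.2)]
    push_cast
    ring
  apply Complex.ofReal_injective
  rw [hcomplex, Complex.betaIntegral_scaled _ _ hs,
    Complex.betaIntegral_eq_Gamma_mul_div _ _ (by simpa using hq) (by simpa using hp)]
  rw [show (q : ℂ) + p - 1 = ((p + q - 1 : ℝ) : ℂ) by push_cast; ring, ← hcpow hs.le,
    ← Complex.ofReal_add, add_comm q p, Complex.Gamma_ofReal, Complex.Gamma_ofReal, Complex.Gamma_ofReal]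
  push_cast
  ring

theorem rlInt_eq_tsum_of_eqOn_tsum_rpow {p s : ℝ} {f : ℝ → ℝ} {c q : ℕ → ℝ} (hp : 0 < p)
    (hq : ∀ k, 0 < q k) (hs : 0 < s) (hf : ∀ r ∈ Ioc 0 s, f r = ∑' k, c k * r ^ (q k - 1))
    (hsum : Summable fun k => |c k| * (Gamma (q k) / Gamma (p + q k) * s ^ (p + q k - 1))) :
    rlInt p f s = ∑' k, c k * (Gamma (q k) / Gamma (p + q k) * s ^ (p + q k - 1)) := by
  set F : ℕ → ℝ → ℝ := fun k r => c k * ((s - r) ^ (p - 1) * r ^ (q k - 1))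
  have hΓp : Gamma p ≠ 0 := (Gamma_pos_of_pos hp).ne'
  have hF_integral (k : ℕ) : ∫ r in Ioc 0 s, F k r =
      Gamma p * (c k * (Gamma (q k) / Gamma (p + q k) * s ^ (p + q k - 1))) := by
    rw [integral_const_mul, ← intervalIntegral.integral_of_le hs.le,
      integral_sub_rpow_mul_rpow hp (hq k) hs]
    ring
  have hF_norm (k : ℕ) : ∫ r in Ioc 0 s, ‖F k r‖ =
      Gamma p * (|c k| * (Gamma (q k) / Gamma (p + q k) * s ^ (p + q k - 1))) := by
    have hnonneg : ∀ r ∈ Ioc 0 s, ‖F k r‖ = |c k| * ((s - r) ^ (p - 1) * r ^ (q k - 1)) :=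
      fun r hr => by
        rw [norm_mul, Real.norm_eq_abs, norm_of_nonneg (mul_nonneg
          (rpow_nonneg (sub_nonneg.2 hr.2) _) (rpow_nonneg hr.1.le _))]
    rw [setIntegral_congr_fun measurableSet_Ioc hnonneg, integral_const_mul,
      ← intervalIntegral.integral_of_le hs.le, integral_sub_rpow_mul_rpow hp (hq k) hs]
    ring
  have hswap : ∫ r in Ioc 0 s, ∑' k, F k r = ∑' k, ∫ r in Ioc 0 s, F k r :=
    (integral_tsum_of_summable_integral_norm
      (fun k => ((intervalIntegrable_sub_rpow_mul_rpow hp (hq k) hs).1).const_mul (c k))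
      ((hsum.mul_left (Gamma p)).congr fun k => (hF_norm k).symm)).symm
  have hexpand : ∀ r ∈ Ioc 0 s, (s - r) ^ (p - 1) * f r = ∑' k, F k r := fun r hr => by
    rw [hf r hr, ← tsum_mul_left]
    congr 1 with k
    ring
  rw [rlInt, intervalIntegral.integral_of_le hs.le, setIntegral_congr_fun measurableSet_Ioc hexpand,
    hswap, tsum_congr hF_integral, tsum_mul_left]
  field_simp

theorem rlInt_rpow_mul_mittagLeffler {β ρ p : ℝ} (hβ : 0 < β) (hρ : 0 < ρ) (hp : 0 < p) (a : ℝ)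
    {s : ℝ} (hs : 0 < s) :
    rlInt p (fun r => r ^ (ρ - 1) * mittagLeffler β ρ (a * r ^ β)) s =
      s ^ (ρ + p - 1) * mittagLeffler β (ρ + p) (a * s ^ β) := by
  have hq (k : ℕ) : 0 < β * k + ρ := by positivity
  have hterm (x : ℝ) (k : ℕ) : x ^ k / Gamma (β * k + ρ) *
      (Gamma (β * k + ρ) / Gamma (p + (β * k + ρ)) * s ^ (p + (β * k + ρ) - 1)) =
        x ^ k * s ^ (β * k + (ρ + p - 1)) / Gamma (β * k + (ρ + p)) := by
    have := (Gamma_pos_of_pos (hq k)).ne'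
    field_simp
    ring_nf
  rw [rpow_mul_mittagLeffler hs, ← tsum_congr (hterm a)]
  refine rlInt_eq_tsum_of_eqOn_tsum_rpow hp hq hs (fun r hr => ?_) ?_
  · rw [rpow_mul_mittagLeffler hr.1]
    congr 1 with k
    ring_nf
  · refine (summable_pow_mul_rpow_div_Gamma hβ (ρ + p) (ρ + p - 1) |a| hs).congr fun k => ?_
    rw [← hterm, abs_div, abs_pow, abs_of_pos (Gamma_pos_of_pos (hq k))]

theorem hasDerivAt_rpow_div_Gamma_add_one {e t : ℝ} (he : e ≠ 0) (ht : t ≠ 0) :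
    HasDerivAt (fun s => s ^ e / Gamma (e + 1)) (t ^ (e - 1) / Gamma e) t := by
  refine ((hasDerivAt_rpow_const (p := e) (Or.inl ht)).div_const (Gamma (e + 1))).congr_deriv ?_
  rw [Gamma_add_one he]
  field_simp

theorem hasDerivAt_rpow_mul_mittagLeffler {β c : ℝ} (hβ : 0 < β) (hc : 0 < c) (a : ℝ) {t : ℝ}
    (ht : 0 < t) :
    HasDerivAt (fun s => s ^ c * mittagLeffler β (c + 1) (a * s ^ β))
      (t ^ (c - 1) * mittagLeffler β c (a * t ^ β)) t := by
  have he (k : ℕ) : 0 < β * k + c := by positivity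
  set g : ℕ → ℝ → ℝ := fun k s => a ^ k * (s ^ (β * k + c) / Gamma (β * k + c + 1))
  set g' : ℕ → ℝ → ℝ := fun k s => a ^ k * (s ^ (β * k + c - 1) / Gamma (β * k + c))
  obtain ⟨C, hC⟩ := isCompact_Icc.exists_bound_of_continuousOn
    ((continuousOn_id (s := Icc (t / 2) (2 * t))).rpow_const (p := c - 1)
      fun y hy => Or.inl (by linarith [hy.1] : (0:ℝ) < y).ne')
  have hg (k : ℕ) (y : ℝ) (hy : y ∈ Ioo (t / 2) (2 * t)) : HasDerivAt (g k) (g' k y) y :=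
    (hasDerivAt_rpow_div_Gamma_add_one (he k).ne'
      (by linarith [hy.1] : (0:ℝ) < y).ne').const_mul (a ^ k)
  have hg' (k : ℕ) (y : ℝ) (hy : y ∈ Ioo (t / 2) (2 * t)) :
      ‖g' k y‖ ≤ C * ((|a| * (2 * t) ^ β) ^ k / Gamma (β * k + c)) := by
    have hy0 : 0 < y := by linarith [hy.1]
    have hΓ := Gamma_pos_of_pos (he k)
    have hCy : |y ^ (c - 1)| ≤ C := by simpa using hC y (Ioo_subset_Icc_self hy)
    simp only [g']
    rw [show β * k + c - 1 = β * k + (c - 1) by ring, rpow_add hy0, mul_pow,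
      ← rpow_mul_natCast (by positivity), Real.norm_eq_abs, abs_mul, abs_div,
      abs_of_pos hΓ, abs_mul, abs_pow, abs_of_pos (rpow_pos_of_pos hy0 _)]
    have : y ^ (β * k) ≤ (2 * t) ^ (β * k) := rpow_le_rpow hy0.le hy.2.le (by positivity)
    calc |a| ^ k * (y ^ (β * k) * |y ^ (c - 1)| / Gamma (β * k + c))
        ≤ |a| ^ k * ((2 * t) ^ (β * k) * C / Gamma (β * k + c)) := by gcongr
      _ = C * (|a| ^ k * (2 * t) ^ (β * k) / Gamma (β * k + c)) := by ring
  have hderiv := hasDerivAt_tsum_of_isPreconnected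
    ((summable_pow_div_Gamma_mul_add hβ c _).mul_left C) isOpen_Ioo
    (convex_Ioo _ _).isPreconnected hg hg' (y₀ := t) (y := t) ⟨by linarith, by linarith⟩
    (by simpa only [g, mul_div_assoc', add_assoc] using
      summable_pow_mul_rpow_div_Gamma hβ (c + 1) c a ht) ⟨by linarith, by linarith⟩
  refine (hderiv.congr_of_eventuallyEq ?_).congr_deriv ?_
  · filter_upwards [isOpen_Ioi.mem_nhds ht] with s hs
    simp only [rpow_mul_mittagLeffler hs, g, mul_div_assoc, add_assoc]
  · simp only [rpow_mul_mittagLeffler ht, g', mul_div_assoc, add_sub_assoc]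

theorem mittagLeffler_rl_deriv_general (β ρ γ a : ℝ)
    (hβ0 : 0 < β) (hγ0 : 0 < γ) (hγ1 : γ < 1) (hργ : γ < ρ) :
    ∀ t > (0:ℝ),
      HasDerivAt
        (fun s => rlInt (1 - γ) (fun r => r ^ (ρ - 1) * mittagLeffler β ρ (a * r ^ β)) s)
        (t ^ (ρ - γ - 1) * mittagLeffler β (ρ - γ) (a * t ^ β)) t := by
  intro t ht
  have hrlInt : (fun s => rlInt (1 - γ) (fun r => r ^ (ρ - 1) * mittagLeffler β ρ (a * r ^ β)) s)
      =ᶠ[𝓝 t] fun s => s ^ (ρ - γ) * mittagLeffler β (ρ - γ + 1) (a * s ^ β) := by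
    filter_upwards [isOpen_Ioi.mem_nhds ht] with s hs
    rw [rlInt_rpow_mul_mittagLeffler hβ0 (hγ0.trans hργ) (by linarith) a hs,
      show ρ + (1 - γ) - 1 = ρ - γ by ring, show ρ + (1 - γ) = ρ - γ + 1 by ring]
  exact (hasDerivAt_rpow_mul_mittagLeffler hβ0 (by linarith) a ht).congr_of_eventuallyEq hrlInt

/-- For `β ∈ (0,1)`, `γ ∈ (0,1)`, `ρ > γ`, `a ∈ ℝ`, and
`y_{β,ρ}(t) = t^{ρ−1} E_{β,ρ}(a t^β)`, the function `u = I^{1−γ} y_{β,ρ}`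
is differentiable at every `t > 0` with
`u′(t) = t^{ρ−γ−1} E_{β,ρ−γ}(a t^β)`; i.e. `D^γ y_{β,ρ} = y_{β,ρ−γ}`. -/
theorem mittagLeffler_rl_deriv (β ρ γ a : ℝ)
    (hβ0 : 0 < β) (hβ1 : β < 1) (hγ0 : 0 < γ) (hγ1 : γ < 1) (hργ : γ < ρ) :
    ∀ t > (0:ℝ),
      HasDerivAt
        (fun s => rlInt (1 - γ) (fun r => r ^ (ρ - 1) * mittagLeffler β ρ (a * r ^ β)) s)
        (t ^ (ρ - γ - 1) * mittagLeffler β (ρ - γ) (a * t ^ β)) t :=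
  mittagLeffler_rl_deriv_general β ρ γ a hβ0 hγ0 hγ1 hργ
end
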